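/- arXiv:1601.02330 — 8 statements merged into one kernel-verified Lean document; each statement's English description precedes it below -/
import Mathlib

section
/- Let k be a positive integer such that k = 3m² for some positive integer m. Then 4·L₁,₂(k) = N₁,₂(k) − 4. -/
noncomputable def N12 (k : ℕ) : ℕ := {p : ℤ × ℤ | p.1 ^ 2 + 2 * p.2 ^ 2 = (k : ℤ)}.ncard

noncomputable def L12 (k : ℕ) : ℕ := {p : ℕ × ℕ | 0 < p.1 ∧ 0 < p.2 ∧ p.1 ≠ p.2 ∧ p.1 ^ 2 + 2 * p.2 ^ 2 = k}.ncard

/-!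
Every integer solution of x² + 2y² = k is obtained from the natural solution (|x|, |y|) by a
choice of signs, and when no solution has a zero coordinate each natural solution comes from
exactly four integer ones. For k = 3m² this is the case, since neither 3 nor 6 is a square; and
the only natural solution with x = y is (m, m). Hence N₁,₂(k) = 4 (L₁,₂(k) + 1).
-/

lemma isSquare_of_mul_sq_eq_sq {n m a : ℕ} (hm : m ≠ 0) (h : n * m ^ 2 = a ^ 2) :
    IsSquare n := by
  rw [← Rat.isSquare_natCast_iff]
  refine ⟨a / m, ?_⟩
  have hm' : (m : ℚ) ≠ 0 := by exact_mod_cast hm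
  field_simp
  exact_mod_cast h

lemma Int.exists_unit_mul_natAbs (x : ℤ) : ∃ u : ℤˣ, x = u * x.natAbs := by
  rcases Int.natAbs_eq x with h | h
  · exact ⟨1, by rw [Units.val_one, one_mul]; exact h⟩
  · exact ⟨-1, by rw [Units.val_neg, Units.val_one, neg_one_mul]; exact h⟩

lemma ncard_preimage_natAbs {S : Set (ℕ × ℕ)} (hS : ∀ p ∈ S, p.1 ≠ 0 ∧ p.2 ≠ 0) :
    (Prod.map Int.natAbs Int.natAbs ⁻¹' S).ncard = 4 * S.ncard := by
  let Φ : (ℤˣ × ℤˣ) × (ℕ × ℕ) → ℤ × ℤ := fun q => (q.1.1 * q.2.1, q.1.2 * q.2.2)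
  have hnatAbs (u : ℤˣ) (a : ℕ) : (u * a : ℤ).natAbs = a := by
    rw [Int.natAbs_mul, Int.units_natAbs, one_mul, Int.natAbs_natCast]
  have himage : Prod.map Int.natAbs Int.natAbs ⁻¹' S = Φ '' (Set.univ ×ˢ S) := by
    ext p
    constructor
    · intro hp
      obtain ⟨u, hu⟩ := p.1.exists_unit_mul_natAbs
      obtain ⟨v, hv⟩ := p.2.exists_unit_mul_natAbs
      exact ⟨((u, v), (p.1.natAbs, p.2.natAbs)), ⟨trivial, hp⟩, by simp only [Φ, ← hu, ← hv]⟩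
    · rintro ⟨⟨⟨u, v⟩, ⟨a, b⟩⟩, ⟨-, hab⟩, rfl⟩
      simpa only [Set.mem_preimage, Prod.map, Φ, hnatAbs] using hab
  have hinj : Set.InjOn Φ (Set.univ ×ˢ S) := by
    rintro ⟨⟨u, v⟩, ⟨a, b⟩⟩ ⟨-, hab⟩ ⟨⟨u', v'⟩, ⟨a', b'⟩⟩ ⟨-, -⟩ h
    obtain ⟨h₁, h₂⟩ := Prod.mk.inj h
    dsimp only at h₁ h₂
    have ha : a = a' := by simpa only [hnatAbs] using congrArg Int.natAbs h₁
    have hb : b = b' := by simpa only [hnatAbs] using congrArg Int.natAbs h₂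
    subst ha hb
    have ha0 : (a : ℤ) ≠ 0 := by exact_mod_cast (hS _ hab).1
    have hb0 : (b : ℤ) ≠ 0 := by exact_mod_cast (hS _ hab).2
    rw [Units.ext (mul_right_cancel₀ ha0 h₁), Units.ext (mul_right_cancel₀ hb0 h₂)]
  rw [himage, hinj.ncard_image, Set.ncard_prod, Set.ncard_univ,
    Nat.card_eq_fintype_card, Fintype.card_prod, Fintype.card_units_int]

def natReps12 (k : ℕ) : Set (ℕ × ℕ) := {p | p.1 ^ 2 + 2 * p.2 ^ 2 = k}

lemma N12_eq_ncard_preimage_natAbs (k : ℕ) :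
    N12 k = (Prod.map Int.natAbs Int.natAbs ⁻¹' natReps12 k).ncard := by
  unfold N12
  congr 1
  ext p
  change _ ↔ (p.1.natAbs ^ 2 + 2 * p.2.natAbs ^ 2 : ℕ) = k
  rw [← Int.natCast_inj]
  push_cast
  rw [sq_abs, sq_abs]
  rfl

lemma natReps12_finite (k : ℕ) : (natReps12 k).Finite :=
  (Set.finite_Iic (k, k)).subset fun p (hp : p.1 ^ 2 + 2 * p.2 ^ 2 = k) =>
    ⟨by nlinarith, by nlinarith⟩

lemma ne_zero_of_mem_natReps12_three_mul_sq {m : ℕ} (hm : m ≠ 0) {p : ℕ × ℕ}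
    (hp : p ∈ natReps12 (3 * m ^ 2)) : p.1 ≠ 0 ∧ p.2 ≠ 0 := by
  obtain ⟨a, b⟩ := p
  change a ^ 2 + 2 * b ^ 2 = 3 * m ^ 2 at hp
  constructor
  · rintro rfl
    have : ¬IsSquare 6 := by norm_num
    exact this (isSquare_of_mul_sq_eq_sq (a := 2 * b) hm (by linarith))
  · rintro rfl
    have : ¬IsSquare 3 := by norm_num
    exact this (isSquare_of_mul_sq_eq_sq (a := a) hm (by linarith))

lemma natReps12_three_mul_sq {m : ℕ} (hm : m ≠ 0) :
    natReps12 (3 * m ^ 2) = insert (m, m)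
      {p : ℕ × ℕ | 0 < p.1 ∧ 0 < p.2 ∧ p.1 ≠ p.2 ∧ p.1 ^ 2 + 2 * p.2 ^ 2 = 3 * m ^ 2} := by
  ext ⟨a, b⟩
  constructor
  · intro hp
    obtain ⟨ha, hb⟩ := ne_zero_of_mem_natReps12_three_mul_sq hm hp
    change a ^ 2 + 2 * b ^ 2 = 3 * m ^ 2 at hp
    rcases eq_or_ne a b with rfl | hab
    · obtain rfl : a = m := Nat.pow_left_injective two_ne_zero (by simp only; omega)
      exact Or.inl rfl
    · exact Or.inr ⟨Nat.pos_of_ne_zero ha, Nat.pos_of_ne_zero hb, hab, hp⟩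
  · rintro (h | ⟨-, -, -, hp⟩)
    · rw [h]
      change m ^ 2 + 2 * m ^ 2 = 3 * m ^ 2
      ring
    · exact hp

lemma ncard_natReps12_three_mul_sq {m : ℕ} (hm : m ≠ 0) :
    (natReps12 (3 * m ^ 2)).ncard = L12 (3 * m ^ 2) + 1 := by
  rw [natReps12_three_mul_sq hm, Set.ncard_insert_of_notMem (fun h => h.2.2.1 rfl)
    ((natReps12_finite _).subset fun p hp => hp.2.2.2)]
  rfl

theorem stmt2_general (k : ℕ)
    (h : ∃ m : ℕ, 0 < m ∧ k = 3 * m ^ 2) :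
    (4 * L12 k : ℤ) = N12 k - 4 := by
  obtain ⟨m, hm, rfl⟩ := h
  rw [N12_eq_ncard_preimage_natAbs,
    ncard_preimage_natAbs fun p => ne_zero_of_mem_natReps12_three_mul_sq hm.ne',
    ncard_natReps12_three_mul_sq hm.ne']
  push_cast
  ring

theorem stmt2 (k : ℕ) (hk : 0 < k)
    (h : ∃ m : ℕ, 0 < m ∧ k = 3 * m ^ 2) :
    (4 * L12 k : ℤ) = N12 k - 4 :=
  stmt2_general k h
end

section
/- Let k be a positive integer such that either k = m² for some odd positive integer m, or k = 3m² for some positive integer m. Then 4·L₁,₃(k) = N₁,₃(k) − 2. -/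
noncomputable def N13 (k : ℕ) : ℕ := {p : ℤ × ℤ | p.1 ^ 2 + 3 * p.2 ^ 2 = (k : ℤ)}.ncard

noncomputable def L13 (k : ℕ) : ℕ := {p : ℕ × ℕ | 0 < p.1 ∧ 0 < p.2 ∧ p.1 ≠ p.2 ∧ p.1 ^ 2 + 3 * p.2 ^ 2 = k}.ncard

/-
Off the coordinate axes, the solutions of x² + 3y² = k fall into orbits of four under the sign
changes (x, y) ↦ (±x, ±y), each meeting the open positive quadrant exactly once. On the axes there
are exactly two solutions, (±m, 0) or (0, ±m), because 3 is not the square of a rational number.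
Finally a positive solution with x = y would force k = 4x², which is neither an odd square nor
three times a square.
-/

open Set

theorem Set.ncard_setOf_natAbs_mem {T : Set (ℕ × ℕ)} (hT : ∀ q ∈ T, 0 < q.1 ∧ 0 < q.2) :
    {p : ℤ × ℤ | (p.1.natAbs, p.2.natAbs) ∈ T}.ncard = 4 * T.ncard := by
  set f : (ℕ × ℕ) × ℤˣ × ℤˣ → ℤ × ℤ := fun x => (x.2.1 * x.1.1, x.2.2 * x.1.2)
  have hnatAbs (u : ℤˣ) (n : ℕ) : ((u : ℤ) * n).natAbs = n := by
    rcases Int.units_eq_one_or u with rfl | rfl <;> simp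
  have hsign (x : ℤ) : ∃ u : ℤˣ, x = u * x.natAbs := by
    rcases Int.natAbs_eq x with h | h
    · exact ⟨1, by simpa using h⟩
    · exact ⟨-1, by simpa using h⟩
  have himage : {p : ℤ × ℤ | (p.1.natAbs, p.2.natAbs) ∈ T} = f '' (T ×ˢ univ) := by
    ext ⟨x, y⟩
    constructor
    · intro h
      obtain ⟨u, hu⟩ := hsign x
      obtain ⟨v, hv⟩ := hsign y
      exact ⟨((x.natAbs, y.natAbs), u, v), ⟨h, trivial⟩, Prod.ext hu.symm hv.symm⟩
    · rintro ⟨⟨q, u, v⟩, ⟨hq, -⟩, hxy⟩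
      rw [← hxy]
      simpa [f, hnatAbs] using hq
  have hinj : InjOn f (T ×ˢ univ) := by
    rintro ⟨⟨a, b⟩, u, v⟩ ⟨ha, -⟩ ⟨⟨c, d⟩, u', v'⟩ ⟨hc, -⟩ h
    simp only [f, Prod.mk.injEq] at h
    have hac : a = c := by simpa [hnatAbs] using congrArg Int.natAbs h.1
    have hbd : b = d := by simpa [hnatAbs] using congrArg Int.natAbs h.2
    subst hac hbd
    have ha0 : (a : ℤ) ≠ 0 := by exact_mod_cast (hT _ ha).1.ne'
    have hb0 : (b : ℤ) ≠ 0 := by exact_mod_cast (hT _ ha).2.ne'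
    simp [Units.ext_iff, mul_right_cancel₀ ha0 h.1, mul_right_cancel₀ hb0 h.2]
  rw [himage, hinj.ncard_image, ncard_prod, ncard_univ, Nat.card_eq_fintype_card,
    Fintype.card_prod, Fintype.card_units_int, mul_comm]

theorem Nat.Prime.eq_zero_of_mul_sq_eq_sq {p a b : ℕ} (hp : p.Prime) (h : p * a ^ 2 = b ^ 2) :
    a = 0 := by
  by_contra ha
  have := congrArg (fun n => n.factorization p) h
  simp [Nat.factorization_mul hp.ne_zero (pow_ne_zero 2 ha), hp.factorization] at this
  omega

theorem Int.eq_zero_of_prime_mul_sq_eq_sq {p : ℕ} {a b : ℤ} (hp : p.Prime)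
    (h : p * a ^ 2 = b ^ 2) : a = 0 := by
  have h' : p * a.natAbs ^ 2 = b.natAbs ^ 2 := by
    zify; simpa only [sq_abs] using h
  exact Int.natAbs_eq_zero.mp (hp.eq_zero_of_mul_sq_eq_sq h')

def axisSolutions13 (k : ℕ) : Set (ℤ × ℤ) :=
  {p | p.1 ^ 2 + 3 * p.2 ^ 2 = (k : ℤ) ∧ (p.1 = 0 ∨ p.2 = 0)}

def positiveSolutions13 (k : ℕ) : Set (ℕ × ℕ) :=
  {q | 0 < q.1 ∧ 0 < q.2 ∧ q.1 ^ 2 + 3 * q.2 ^ 2 = k}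

theorem finite_setOf_sq_add_three_mul_sq_eq (k : ℕ) :
    {p : ℤ × ℤ | p.1 ^ 2 + 3 * p.2 ^ 2 = (k : ℤ)}.Finite := by
  refine (finite_Icc (-(k : ℤ), -(k : ℤ)) ((k : ℤ), (k : ℤ))).subset ?_
  rintro ⟨x, y⟩ (hxy : x ^ 2 + 3 * y ^ 2 = k)
  simp only [mem_Icc, Prod.mk_le_mk]
  refine ⟨⟨?_, ?_⟩, ?_, ?_⟩ <;>
    nlinarith [Int.le_self_sq x, Int.le_self_sq (-x), Int.le_self_sq y, Int.le_self_sq (-y)]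

theorem N13_eq_ncard_axisSolutions13_add (k : ℕ) :
    N13 k = (axisSolutions13 k).ncard + 4 * (positiveSolutions13 k).ncard := by
  have hS := finite_setOf_sq_add_three_mul_sq_eq k
  have hsplit : {p : ℤ × ℤ | p.1 ^ 2 + 3 * p.2 ^ 2 = (k : ℤ)} = axisSolutions13 k ∪
      {p : ℤ × ℤ | (p.1.natAbs, p.2.natAbs) ∈ positiveSolutions13 k} := by
    ext ⟨x, y⟩
    simp only [axisSolutions13, positiveSolutions13, mem_union, mem_ofPred_eq, Int.natAbs_pos]
    rw [← Int.natCast_inj]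
    push_cast
    simp only [sq_abs]
    tauto
  have hdisj : Disjoint (axisSolutions13 k)
      {p : ℤ × ℤ | (p.1.natAbs, p.2.natAbs) ∈ positiveSolutions13 k} := by
    rw [disjoint_left]
    rintro ⟨x, y⟩ ⟨-, hxy⟩ ⟨hx, hy, -⟩
    simp_all
  rw [N13, hsplit, ncard_union_eq hdisj (hS.subset (by rw [hsplit]; exact subset_union_left))
    (hS.subset (by rw [hsplit]; exact subset_union_right)),
    ncard_setOf_natAbs_mem fun q hq => ⟨hq.1, hq.2.1⟩]

theorem L13_eq_ncard_positiveSolutions13 {k : ℕ} (hk : ∀ a : ℕ, 4 * a ^ 2 ≠ k) :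
    L13 k = (positiveSolutions13 k).ncard := by
  rw [L13]
  congr 1
  ext ⟨a, b⟩
  simp only [positiveSolutions13, mem_ofPred_eq]
  refine ⟨fun ⟨ha, hb, _, h⟩ => ⟨ha, hb, h⟩, fun ⟨ha, hb, h⟩ => ⟨ha, hb, ?_, h⟩⟩
  rintro rfl
  exact hk a (by rw [← h]; ring)

theorem ncard_axisSolutions13_sq {m : ℕ} (hm : 0 < m) : (axisSolutions13 (m ^ 2)).ncard = 2 := by
  have : axisSolutions13 (m ^ 2) = {((m : ℤ), 0), (-(m : ℤ), 0)} := by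
    ext ⟨x, y⟩
    simp only [axisSolutions13, mem_ofPred_eq, mem_insert_iff, mem_singleton_iff, Prod.mk.injEq]
    push_cast
    constructor
    · rintro ⟨h, rfl | rfl⟩
      · have hy : y = 0 := Int.eq_zero_of_prime_mul_sq_eq_sq Nat.prime_three (by simpa using h)
        have hm' : (0 : ℤ) < m := by exact_mod_cast hm
        subst hy
        nlinarith
      · simpa [sq_eq_sq_iff_eq_or_eq_neg] using h
    · rintro (⟨rfl, rfl⟩ | ⟨rfl, rfl⟩) <;> simp
  rw [this, ncard_pair (by simp; omega)]

theorem ncard_axisSolutions13_three_mul_sq {m : ℕ} (hm : 0 < m) :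
    (axisSolutions13 (3 * m ^ 2)).ncard = 2 := by
  have : axisSolutions13 (3 * m ^ 2) = {(0, (m : ℤ)), (0, -(m : ℤ))} := by
    ext ⟨x, y⟩
    simp only [axisSolutions13, mem_ofPred_eq, mem_insert_iff, mem_singleton_iff, Prod.mk.injEq]
    push_cast
    constructor
    · rintro ⟨h, rfl | rfl⟩
      · simpa [sq_eq_sq_iff_eq_or_eq_neg] using h
      · have : (m : ℤ) = 0 := Int.eq_zero_of_prime_mul_sq_eq_sq Nat.prime_three (by simpa using h.symm)
        omega
    · rintro (⟨rfl, rfl⟩ | ⟨rfl, rfl⟩) <;> simp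
  rw [this, ncard_pair (by simp; omega)]

theorem four_mul_sq_ne_sq_of_odd {m : ℕ} (hm : Odd m) (a : ℕ) : 4 * a ^ 2 ≠ m ^ 2 := by
  intro h
  have : 2 * a = m := Nat.pow_left_injective two_ne_zero
    (show (2 * a) ^ 2 = m ^ 2 by rw [← h]; ring)
  exact Nat.not_even_iff_odd.mpr hm ⟨a, by omega⟩

theorem four_mul_sq_ne_three_mul_sq {m : ℕ} (hm : 0 < m) (a : ℕ) : 4 * a ^ 2 ≠ 3 * m ^ 2 := by
  intro h
  have := Nat.prime_three.eq_zero_of_mul_sq_eq_sq (b := 2 * a) (by rw [← h]; ring)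
  omega

theorem stmt4_general (k : ℕ)
    (h : (∃ m : ℕ, 0 < m ∧ Odd m ∧ k = m ^ 2) ∨ (∃ m : ℕ, 0 < m ∧ k = 3 * m ^ 2)) :
    (4 * L13 k : ℤ) = N13 k - 2 := by
  suffices hk : (axisSolutions13 k).ncard = 2 ∧ ∀ a : ℕ, 4 * a ^ 2 ≠ k by
    rw [N13_eq_ncard_axisSolutions13_add, hk.1, L13_eq_ncard_positiveSolutions13 hk.2]
    push_cast
    ring
  rcases h with ⟨m, hm, hodd, rfl⟩ | ⟨m, hm, rfl⟩
  · exact ⟨ncard_axisSolutions13_sq hm, four_mul_sq_ne_sq_of_odd hodd⟩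
  · exact ⟨ncard_axisSolutions13_three_mul_sq hm, four_mul_sq_ne_three_mul_sq hm⟩

theorem stmt4 (k : ℕ) (hk : 0 < k)
    (h : (∃ m : ℕ, 0 < m ∧ Odd m ∧ k = m ^ 2) ∨ (∃ m : ℕ, 0 < m ∧ k = 3 * m ^ 2)) :
    (4 * L13 k : ℤ) = N13 k - 2 :=
  stmt4_general k h
end

section
/- Let k be a positive integer. If k is even, then N₁,₁,₂(k) = N₃(2k); if k is odd, then 3·N₁,₁,₂(k) = N₃(2k). -/
noncomputable def N3 (k : ℕ) : ℕ := {t : ℤ × ℤ × ℤ | t.1 ^ 2 + t.2.1 ^ 2 + t.2.2 ^ 2 = (k : ℤ)}.ncard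

noncomputable def N112 (k : ℕ) : ℕ := {t : ℤ × ℤ × ℤ | t.1 ^ 2 + t.2.1 ^ 2 + 2 * t.2.2 ^ 2 = (k : ℤ)}.ncard

/-!
The map `(x, y, z) ↦ (x + y, x - y, 2 * z)` identifies the representations of `k` by
`x² + y² + 2z²` with the representations of `2k` as a sum of three squares whose last entry is
even. Squares are `0` or `1` mod `4`, so in a representation of `2k` all three entries are even
when `k` is even, and exactly one is even when `k` is odd; by permuting coordinates each
position is the even one equally often.
-/

def threeSqReps (n : ℤ) : Set (ℤ × ℤ × ℤ) := {t | t.1 ^ 2 + t.2.1 ^ 2 + t.2.2 ^ 2 = n}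

@[simp]
theorem mem_threeSqReps {n : ℤ} {t : ℤ × ℤ × ℤ} :
    t ∈ threeSqReps n ↔ t.1 ^ 2 + t.2.1 ^ 2 + t.2.2 ^ 2 = n := Iff.rfl

theorem Int.mem_Icc_of_sq_le {x n : ℤ} (h : x ^ 2 ≤ n) : x ∈ Set.Icc (-n) n :=
  abs_le.mp ((Int.natCast_natAbs x ▸ Int.natAbs_le_self_sq x).trans h)

theorem threeSqReps_finite (n : ℤ) : (threeSqReps n).Finite := by
  have hI := Set.finite_Icc (-n) n
  refine (hI.prod (hI.prod hI)).subset ?_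
  rintro ⟨x, y, z⟩ h
  simp only [mem_threeSqReps] at h
  exact ⟨Int.mem_Icc_of_sq_le (by nlinarith [sq_nonneg y, sq_nonneg z]),
    Int.mem_Icc_of_sq_le (by nlinarith [sq_nonneg x, sq_nonneg z]),
    Int.mem_Icc_of_sq_le (by nlinarith [sq_nonneg x, sq_nonneg y])⟩

theorem Int.sq_emod_four (a : ℤ) : a ^ 2 % 4 = if Even a then 0 else 1 := by
  split_ifs with ha
  · obtain ⟨b, rfl⟩ := ha
    rw [show (b + b) ^ 2 = 4 * b ^ 2 by ring, Int.mul_emod_right]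
  · exact Int.sq_mod_four_eq_one_of_odd (Int.not_even_iff_odd.mp ha)

section Parity

variable {a b c k : ℤ}

theorem even_or_even_or_even_of_sq_add_sq_add_sq_eq_two_mul
    (h : a ^ 2 + b ^ 2 + c ^ 2 = 2 * k) : Even a ∨ Even b ∨ Even c := by
  have hsum : Even (a ^ 2 + b ^ 2 + c ^ 2) := h ▸ even_two_mul k
  by_contra! hodd
  simp [Int.even_add, Int.even_pow, hodd] at hsum

theorem even_and_even_and_even_of_sq_add_sq_add_sq_eq_two_mul (hk : Even k)
    (h : a ^ 2 + b ^ 2 + c ^ 2 = 2 * k) : Even a ∧ Even b ∧ Even c := by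
  have ha := Int.sq_emod_four a
  have hb := Int.sq_emod_four b
  have hc := Int.sq_emod_four c
  rw [Int.even_iff] at hk
  split_ifs at ha hb hc <;> first | exact ⟨‹_›, ‹_›, ‹_›⟩ | omega

theorem not_even_and_even_of_sq_add_sq_add_sq_eq_two_mul (hk : Odd k)
    (h : a ^ 2 + b ^ 2 + c ^ 2 = 2 * k) : ¬(Even a ∧ Even b) := by
  have ha := Int.sq_emod_four a
  have hb := Int.sq_emod_four b
  have hc := Int.sq_emod_four c
  rw [Int.odd_iff] at hk
  rintro ⟨ha', hb'⟩
  rw [if_pos ha'] at ha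
  rw [if_pos hb'] at hb
  split_ifs at hc <;> omega

end Parity

theorem ncard_sq_add_sq_add_two_mul_sq (k : ℤ) :
    {t : ℤ × ℤ × ℤ | t.1 ^ 2 + t.2.1 ^ 2 + 2 * t.2.2 ^ 2 = k}.ncard =
      {t ∈ threeSqReps (2 * k) | Even t.2.2}.ncard := by
  let f : ℤ × ℤ × ℤ → ℤ × ℤ × ℤ := fun t => (t.1 + t.2.1, t.1 - t.2.1, 2 * t.2.2)
  have hf : f.Injective := by
    rintro ⟨x, y, z⟩ ⟨x', y', z'⟩ h
    simp only [f, Prod.mk.injEq] at h ⊢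
    omega
  have himage : f '' {t | t.1 ^ 2 + t.2.1 ^ 2 + 2 * t.2.2 ^ 2 = k} =
      {t ∈ threeSqReps (2 * k) | Even t.2.2} := by
    ext ⟨a, b, c⟩
    constructor
    · rintro ⟨⟨x, y, z⟩, hxyz, hfxyz⟩
      simp only [f, Prod.mk.injEq] at hfxyz
      obtain ⟨rfl, rfl, rfl⟩ := hfxyz
      exact ⟨mem_threeSqReps.mpr (by linear_combination 2 * hxyz.out), even_two_mul z⟩
    · rintro ⟨habc, z, rfl⟩
      simp only [mem_threeSqReps] at habc
      have hab : Even (a - b) := by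
        have : Even (a ^ 2 + b ^ 2) := ⟨k - 2 * z ^ 2, by linear_combination habc⟩
        simpa [Int.even_add, Int.even_sub, Int.even_pow] using this
      obtain ⟨u, hu⟩ := hab
      obtain rfl : a = b + u + u := by linarith
      refine ⟨(b + u, u, z), ?_, ?_⟩
      · simp only [Set.mem_ofPred_eq]
        linarith
      · simp only [f, Prod.mk.injEq, true_and]
        constructor <;> ring
  rw [← himage, Set.ncard_image_of_injective _ hf]

theorem ncard_sep_threeSqReps_even_fst (n : ℤ) :
    {t ∈ threeSqReps n | Even t.1}.ncard = {t ∈ threeSqReps n | Even t.2.2}.ncard :=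
  Set.ncard_congr (fun t _ => (t.2.2, t.2.1, t.1))
    (fun _ ht => ⟨by grind [mem_threeSqReps], ht.2⟩)
    (fun _ _ _ _ h => by grind)
    (fun t ht => ⟨(t.2.2, t.2.1, t.1), ⟨by grind [mem_threeSqReps], ht.2⟩, rfl⟩)

theorem ncard_sep_threeSqReps_even_snd (n : ℤ) :
    {t ∈ threeSqReps n | Even t.2.1}.ncard = {t ∈ threeSqReps n | Even t.2.2}.ncard :=
  Set.ncard_congr (fun t _ => (t.1, t.2.2, t.2.1))
    (fun _ ht => ⟨by grind [mem_threeSqReps], ht.2⟩)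
    (fun _ _ _ _ h => by grind)
    (fun t ht => ⟨(t.1, t.2.2, t.2.1), ⟨by grind [mem_threeSqReps], ht.2⟩, rfl⟩)

theorem sep_threeSqReps_two_mul_even_of_even {k : ℤ} (hk : Even k) :
    {t ∈ threeSqReps (2 * k) | Even t.2.2} = threeSqReps (2 * k) :=
  Set.sep_eq_self_iff_mem_true.mpr fun _ ht =>
    (even_and_even_and_even_of_sq_add_sq_add_sq_eq_two_mul hk ht).2.2

theorem ncard_threeSqReps_two_mul_of_odd {k : ℤ} (hk : Odd k) :
    (threeSqReps (2 * k)).ncard = 3 * {t ∈ threeSqReps (2 * k) | Even t.2.2}.ncard := by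
  set S := threeSqReps (2 * k)
  have hS := threeSqReps_finite (2 * k)
  have hcover : S = {t ∈ S | Even t.1} ∪ {t ∈ S | Even t.2.1} ∪ {t ∈ S | Even t.2.2} := by
    ext t
    constructor
    · intro ht
      rcases even_or_even_or_even_of_sq_add_sq_add_sq_eq_two_mul ht with h | h | h
      exacts [.inl (.inl ⟨ht, h⟩), .inl (.inr ⟨ht, h⟩), .inr ⟨ht, h⟩]
    · rintro ((ht | ht) | ht) <;> exact ht.1
  have hdisj₁₂ : Disjoint {t ∈ S | Even t.1} {t ∈ S | Even t.2.1} :=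
    Set.disjoint_left.mpr fun t ht ht' =>
      not_even_and_even_of_sq_add_sq_add_sq_eq_two_mul hk ht.1 ⟨ht.2, ht'.2⟩
  have hdisj₃ :
      Disjoint ({t ∈ S | Even t.1} ∪ {t ∈ S | Even t.2.1}) {t ∈ S | Even t.2.2} := by
    refine Set.disjoint_left.mpr fun t ht ht' => ?_
    rcases ht with ht | ht
    · exact not_even_and_even_of_sq_add_sq_add_sq_eq_two_mul hk
        (show t.1 ^ 2 + t.2.2 ^ 2 + t.2.1 ^ 2 = 2 * k by linarith [ht.1.out]) ⟨ht.2, ht'.2⟩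
    · exact not_even_and_even_of_sq_add_sq_add_sq_eq_two_mul hk
        (show t.2.1 ^ 2 + t.2.2 ^ 2 + t.1 ^ 2 = 2 * k by linarith [ht.1.out]) ⟨ht.2, ht'.2⟩
  calc S.ncard
      = ({t ∈ S | Even t.1} ∪ {t ∈ S | Even t.2.1} ∪ {t ∈ S | Even t.2.2}).ncard := by
        rw [← hcover]
    _ = {t ∈ S | Even t.1}.ncard + {t ∈ S | Even t.2.1}.ncard +
          {t ∈ S | Even t.2.2}.ncard := by
        rw [Set.ncard_union_eq hdisj₃ (hS.sep _ |>.union (hS.sep _)) (hS.sep _),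
          Set.ncard_union_eq hdisj₁₂ (hS.sep _) (hS.sep _)]
    _ = 3 * {t ∈ S | Even t.2.2}.ncard := by
        rw [ncard_sep_threeSqReps_even_fst, ncard_sep_threeSqReps_even_snd]
        ring

theorem stmt7_general (k : ℕ) :
    (Even k → N112 k = N3 (2 * k)) ∧ (Odd k → 3 * N112 k = N3 (2 * k)) := by
  have hN112 : N112 k = {t ∈ threeSqReps (2 * k) | Even t.2.2}.ncard :=
    ncard_sq_add_sq_add_two_mul_sq k
  have hN3 : N3 (2 * k) = (threeSqReps (2 * k)).ncard := by
    rw [N3, Nat.cast_mul, Nat.cast_two]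
    rfl
  refine ⟨fun hk => ?_, fun hk => ?_⟩
  · rw [hN112, hN3, sep_threeSqReps_two_mul_even_of_even (by exact_mod_cast hk)]
  · rw [hN112, hN3, ncard_threeSqReps_two_mul_of_odd (by exact_mod_cast hk)]

theorem stmt7 (k : ℕ) (hk : 0 < k) :
    (Even k → N112 k = N3 (2 * k)) ∧ (Odd k → 3 * N112 k = N3 (2 * k)) :=
  stmt7_general k
end

section
/- Let k be a positive integer such that k ≠ m², k ≠ 2m², k ≠ 3m², and k ≠ 4m² for every positive integer m. Then 16·L₁,₁,₂(k) = N₁,₁,₂(k) − 8·L₂(k) − 8·L₁,₂(k) − 16·L₁,₃(k) − 16·L₂(k/2), where L₂(k/2) is interpreted as 0 when k is odd. -/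
noncomputable def L112 (k : ℕ) : ℕ := {t : ℕ × ℕ × ℕ | 0 < t.1 ∧ 0 < t.2.2 ∧ t.1 < t.2.1 ∧ t.1 ≠ t.2.2 ∧ t.2.1 ≠ t.2.2 ∧ t.1 ^ 2 + t.2.1 ^ 2 + 2 * t.2.2 ^ 2 = k}.ncard

noncomputable def L2 (k : ℕ) : ℕ := {p : ℕ × ℕ | 0 < p.1 ∧ p.1 < p.2 ∧ p.1 ^ 2 + p.2 ^ 2 = k}.ncard

noncomputable def L2half (k : ℕ) : ℕ := if k % 2 = 0 then L2 (k / 2) else 0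

open Finset

/-!
Folding the integer solutions by absolute values, `N₁,₁,₂(k)` is the sum over the nonnegative
solutions `(x, y, z)` of `2 ^ (number of nonzero coordinates)`. Swapping `x` and `y` matches the
solutions with `y < x` to those with `x < y`. Under the hypotheses on `k`, a solution with `x < y`
has either `z = 0` (counted by `L₂(k)`), `x = 0` (by `L₁,₂(k)`), `z ∈ {x, y}` (by `L₁,₃(k)`), or
all coordinates positive and `z ∉ {x, y}` (by `L₁,₁,₂(k)`). A solution with `x = y` is `(x, x, z)`
with `x² + z² = k / 2`, `x, z > 0` and `x ≠ z`; swapping `x` and `z` reduces it to `L₂(k / 2)`.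
-/

theorem Finset.sum_eq_two_nsmul_sum_filter_lt_add_sum_filter_eq {ι α M : Type*} [LinearOrder α]
    [AddCommMonoid M] {s : Finset ι} {f : ι → M} (σ : ι → ι) (u v : ι → α)
    (hs : ∀ i ∈ s, σ i ∈ s) (hσ : ∀ i ∈ s, σ (σ i) = i) (hu : ∀ i ∈ s, u (σ i) = v i)
    (hf : ∀ i ∈ s, f (σ i) = f i) :
    ∑ i ∈ s, f i = 2 • ∑ i ∈ s with u i < v i, f i + ∑ i ∈ s with u i = v i, f i := by
  have hv : ∀ i ∈ s, v (σ i) = u i := fun i hi => by rw [← hu _ (hs i hi), hσ i hi]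
  have hgt : ∑ i ∈ s with v i < u i, f i = ∑ i ∈ s with u i < v i, f i :=
    sum_nbij' σ σ (by simp_all) (by simp_all) (by simp_all) (by simp_all) (by simp_all)
  have hsplit : ∑ i ∈ s with ¬u i < v i, f i =
      ∑ i ∈ s with u i = v i, f i + ∑ i ∈ s with v i < u i, f i := by
    rw [← sum_filter_add_sum_filter_not _ (fun i => u i = v i), filter_filter, filter_filter]
    congr 1 <;> exact sum_congr (filter_congr fun i _ => by grind) fun _ _ => rfl
  rw [← sum_filter_add_sum_filter_not s (fun i => u i < v i), hsplit, hgt, two_nsmul]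
  abel

def natAbsFiber (n : ℕ) : Finset ℤ := {(n : ℤ), -(n : ℤ)}

lemma mem_natAbsFiber {n : ℕ} {x : ℤ} : x ∈ natAbsFiber n ↔ x.natAbs = n := by
  rw [Int.natAbs_eq_iff, natAbsFiber, mem_insert, mem_singleton]

lemma card_natAbsFiber_zero : #(natAbsFiber 0) = 1 := by simp [natAbsFiber]

lemma card_natAbsFiber_of_ne_zero {n : ℕ} (hn : n ≠ 0) : #(natAbsFiber n) = 2 :=
  card_pair (by omega)

def signWeight (t : ℕ × ℕ × ℕ) : ℕ :=
  #(natAbsFiber t.1) * #(natAbsFiber t.2.1) * #(natAbsFiber t.2.2)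

lemma ncard_natAbs_preimage (A : Finset (ℕ × ℕ × ℕ)) :
    {t : ℤ × ℤ × ℤ | (t.1.natAbs, t.2.1.natAbs, t.2.2.natAbs) ∈ A}.ncard =
      ∑ t ∈ A, signWeight t := by
  let fiber (t : ℕ × ℕ × ℕ) := natAbsFiber t.1 ×ˢ natAbsFiber t.2.1 ×ˢ natAbsFiber t.2.2
  have hfiber {s t} : s ∈ fiber t ↔ (s.1.natAbs, s.2.1.natAbs, s.2.2.natAbs) = t := by
    simp only [fiber, mem_product, mem_natAbsFiber, Prod.ext_iff]
  have hdisj : (A : Set (ℕ × ℕ × ℕ)).PairwiseDisjoint fiber := fun t _ u _ htu =>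
    disjoint_left.mpr fun s hs hs' => htu ((hfiber.mp hs).symm.trans (hfiber.mp hs'))
  have hset :
      {t : ℤ × ℤ × ℤ | (t.1.natAbs, t.2.1.natAbs, t.2.2.natAbs) ∈ A} = A.biUnion fiber := by
    ext s
    simp [hfiber]
  rw [hset, Set.ncard_coe_finset, card_biUnion hdisj]
  simp only [fiber, card_product, signWeight, mul_assoc]

def natReprs112 (k : ℕ) : Finset (ℕ × ℕ × ℕ) :=
  {t ∈ range (k + 1) ×ˢ range (k + 1) ×ˢ range (k + 1) | t.1 ^ 2 + t.2.1 ^ 2 + 2 * t.2.2 ^ 2 = k}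

lemma mem_natReprs112 {k : ℕ} {t : ℕ × ℕ × ℕ} :
    t ∈ natReprs112 k ↔ t.1 ^ 2 + t.2.1 ^ 2 + 2 * t.2.2 ^ 2 = k := by
  simp only [natReprs112, mem_filter, mem_product, mem_range, and_iff_right_iff_imp]
  intro h
  refine ⟨?_, ?_, ?_⟩ <;> nlinarith

lemma N112_eq_sum_signWeight (k : ℕ) : N112 k = ∑ t ∈ natReprs112 k, signWeight t := by
  rw [N112, ← ncard_natAbs_preimage]
  congr 1
  ext t
  simp only [Set.mem_ofPred_eq, mem_natReprs112]
  zify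
  simp only [sq_abs]

lemma sum_signWeight_natReprs112 (k : ℕ) :
    ∑ t ∈ natReprs112 k, signWeight t =
      2 * ∑ t ∈ natReprs112 k with t.1 < t.2.1, signWeight t +
        ∑ t ∈ natReprs112 k with t.1 = t.2.1, signWeight t :=
  sum_eq_two_nsmul_sum_filter_lt_add_sum_filter_eq (fun t => (t.2.1, t.1, t.2.2)) Prod.fst
    (fun t => t.2.1) (fun t ht => by rw [mem_natReprs112] at ht ⊢; rw [← ht]; ring)
    (fun _ _ => rfl) (fun _ _ => rfl) (fun t _ => by rw [signWeight, signWeight, mul_comm (#_)])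

section

variable {k : ℕ}

lemma card_natReprs112_filter_lt_z_eq_zero (h1 : ∀ m, 0 < m → k ≠ m ^ 2) :
    #{t ∈ natReprs112 k | t.1 < t.2.1 ∧ t.2.2 = 0} = L2 k := by
  rw [L2, ← Set.ncard_coe_finset,
    ← Set.ncard_image_of_injective _ (f := fun p : ℕ × ℕ => (p.1, p.2, 0)) fun p q h => by
      simpa [Prod.ext_iff] using h]
  congr 1
  ext ⟨x, y, z⟩
  simp only [coe_filter, mem_natReprs112, Set.mem_ofPred_eq, Set.mem_image, Prod.mk.injEq]
  constructor
  · rintro ⟨hk, hxy, rfl⟩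
    have hx : 0 < x :=
      Nat.pos_of_ne_zero fun hx => h1 y (by omega) (by subst hx; simpa using hk.symm)
    exact ⟨(x, y), ⟨hx, hxy, by simpa using hk⟩, rfl, rfl, rfl⟩
  · rintro ⟨⟨x, y⟩, ⟨-, hxy, hk⟩, rfl, rfl, rfl⟩
    exact ⟨by simpa using hk, hxy, rfl⟩

lemma card_natReprs112_filter_lt_x_eq_zero (h3 : ∀ m, 0 < m → k ≠ 3 * m ^ 2) :
    #{t ∈ natReprs112 k | t.1 < t.2.1 ∧ t.1 = 0 ∧ 0 < t.2.2} = L12 k := by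
  rw [L12, ← Set.ncard_coe_finset,
    ← Set.ncard_image_of_injective _ (f := fun p : ℕ × ℕ => (0, p.1, p.2)) fun p q h => by
      simpa [Prod.ext_iff] using h]
  congr 1
  ext ⟨x, y, z⟩
  simp only [coe_filter, mem_natReprs112, Set.mem_ofPred_eq, Set.mem_image, Prod.mk.injEq]
  constructor
  · rintro ⟨hk, hxy, rfl, hz⟩
    have hyz : y ≠ z := by rintro rfl; exact h3 y hz (by rw [← hk]; ring)
    exact ⟨(y, z), ⟨hxy, hz, hyz, by simpa using hk⟩, rfl, rfl, rfl⟩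
  · rintro ⟨⟨y, z⟩, ⟨hy, hz, -, hk⟩, rfl, rfl, rfl⟩
    exact ⟨by simpa using hk, hy, rfl, hz⟩

lemma card_natReprs112_filter_lt_z_eq :
    #{t ∈ natReprs112 k | t.1 < t.2.1 ∧ 0 < t.1 ∧ 0 < t.2.2 ∧ (t.1 = t.2.2 ∨ t.2.1 = t.2.2)} =
      L13 k := by
  rw [L13, ← Set.ncard_coe_finset,
    ← Set.ncard_image_of_injective _
      (f := fun p : ℕ × ℕ => if p.1 < p.2 then (p.1, p.2, p.2) else (p.2, p.1, p.2))
      fun p q h => by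
        dsimp only at h
        split_ifs at h <;> simp only [Prod.ext_iff] at h ⊢ <;> omega]
  congr 1
  ext ⟨x, y, z⟩
  simp only [coe_filter, mem_natReprs112, Set.mem_ofPred_eq, Set.mem_image]
  constructor
  · rintro ⟨hk, hxy, hx, hz, rfl | rfl⟩
    · exact ⟨(y, x), ⟨by omega, hx, by omega, by linarith⟩, by simp [hxy.not_gt]⟩
    · exact ⟨(x, y), ⟨hx, hz, by omega, by linarith⟩, by simp [hxy]⟩
  · rintro ⟨⟨a, b⟩, ⟨ha, hb, hab, hk⟩, h⟩
    split_ifs at h with hlt <;> simp only [Prod.mk.injEq] at h <;> obtain ⟨rfl, rfl, rfl⟩ := h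
    · exact ⟨by linarith, hlt, ha, hb, Or.inr rfl⟩
    · exact ⟨by linarith, by omega, hb, hb, Or.inl rfl⟩

lemma card_natReprs112_filter_lt_z_ne :
    #{t ∈ natReprs112 k | t.1 < t.2.1 ∧ 0 < t.1 ∧ 0 < t.2.2 ∧ t.1 ≠ t.2.2 ∧ t.2.1 ≠ t.2.2} =
      L112 k := by
  rw [L112, ← Set.ncard_coe_finset]
  congr 1
  ext t
  simp only [coe_filter, mem_natReprs112, Set.mem_ofPred_eq]
  tauto

lemma pos_of_mem_natReprs112_of_fst_eq (hk : 0 < k) (h2 : ∀ m, 0 < m → k ≠ 2 * m ^ 2)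
    {t : ℕ × ℕ × ℕ} (ht : t ∈ natReprs112 k) (hxy : t.1 = t.2.1) : 0 < t.1 ∧ 0 < t.2.2 := by
  obtain ⟨x, y, z⟩ := t
  rw [mem_natReprs112] at ht
  dsimp only at hxy ht ⊢
  subst hxy
  constructor <;> refine Nat.pos_of_ne_zero fun h0 => ?_ <;> subst h0
  · rcases Nat.eq_zero_or_pos z with rfl | hz
    · omega
    · exact h2 z hz (by rw [← ht]; ring)
  · exact h2 x (Nat.pos_of_ne_zero fun hx => by subst hx; omega) (by rw [← ht]; ring)

lemma card_natReprs112_filter_eq_lt (h2 : ∀ m, 0 < m → k ≠ 2 * m ^ 2) :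
    #{t ∈ natReprs112 k | t.1 = t.2.1 ∧ t.1 < t.2.2} = L2half k := by
  rw [L2half]
  split_ifs with hk2
  · rw [L2, ← Set.ncard_coe_finset,
      ← Set.ncard_image_of_injective _ (f := fun p : ℕ × ℕ => (p.1, p.1, p.2)) fun p q h => by
        simpa [Prod.ext_iff] using h]
    congr 1
    ext ⟨x, y, z⟩
    simp only [coe_filter, mem_natReprs112, Set.mem_ofPred_eq, Set.mem_image, Prod.mk.injEq]
    constructor
    · rintro ⟨hk, rfl, hxz⟩
      have hx : 0 < x :=
        Nat.pos_of_ne_zero fun hx => h2 z (by omega) (by subst hx; simpa using hk.symm)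
      exact ⟨(x, z), ⟨hx, hxz, by dsimp only; omega⟩, rfl, rfl, rfl⟩
    · rintro ⟨⟨x, z⟩, ⟨-, hxz, hk⟩, rfl, rfl, rfl⟩
      exact ⟨by omega, rfl, hxz⟩
  · refine card_eq_zero.mpr (filter_eq_empty_iff.mpr fun t ht hxy => hk2 ?_)
    rw [mem_natReprs112, hxy.1] at ht
    omega

lemma sum_signWeight_natReprs112_filter_eq (hk : 0 < k) (h2 : ∀ m, 0 < m → k ≠ 2 * m ^ 2)
    (h4 : ∀ m, 0 < m → k ≠ 4 * m ^ 2) :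
    ∑ t ∈ natReprs112 k with t.1 = t.2.1, signWeight t = 16 * L2half k := by
  have hpos {t} (ht : t ∈ {t ∈ natReprs112 k | t.1 = t.2.1}) :=
    pos_of_mem_natReprs112_of_fst_eq hk h2 (mem_filter.mp ht).1 (mem_filter.mp ht).2
  have hweight : ∀ t ∈ {t ∈ natReprs112 k | t.1 = t.2.1}, signWeight t = 8 := fun t ht => by
    obtain ⟨hx, hz⟩ := hpos ht
    rw [mem_filter] at ht
    rw [signWeight, ← ht.2, card_natAbsFiber_of_ne_zero hx.ne', card_natAbsFiber_of_ne_zero hz.ne']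
  have hdiag : {t ∈ {t ∈ natReprs112 k | t.1 = t.2.1} | t.1 = t.2.2} = ∅ := by
    refine filter_eq_empty_iff.mpr fun t ht hxz => h4 t.1 (hpos ht).1 ?_
    obtain ⟨ht, hxy⟩ := mem_filter.mp ht
    rw [mem_natReprs112, ← hxy, ← hxz] at ht
    rw [← ht]; ring
  calc ∑ t ∈ natReprs112 k with t.1 = t.2.1, signWeight t
      = ∑ t ∈ natReprs112 k with t.1 = t.2.1, 8 := sum_congr rfl hweight
    _ = 2 • ∑ t ∈ {t ∈ natReprs112 k | t.1 = t.2.1} with t.1 < t.2.2, 8 +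
          ∑ t ∈ {t ∈ natReprs112 k | t.1 = t.2.1} with t.1 = t.2.2, 8 :=
        sum_eq_two_nsmul_sum_filter_lt_add_sum_filter_eq (fun t => (t.2.2, t.2.2, t.1))
          Prod.fst (fun t => t.2.2)
          (fun t ht => by
            simp only [mem_filter, mem_natReprs112, and_true] at ht ⊢
            rw [← ht.1, ← ht.2]
            ring)
          (fun t ht => Prod.ext rfl (Prod.ext (mem_filter.mp ht).2 rfl))
          (fun _ _ => rfl) (fun _ _ => rfl)
    _ = 16 * L2half k := by
      rw [hdiag, filter_filter, sum_const, sum_const, card_natReprs112_filter_eq_lt h2]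
      simp only [smul_eq_mul, card_empty]
      ring

lemma sum_signWeight_natReprs112_filter_lt (h1 : ∀ m, 0 < m → k ≠ m ^ 2)
    (h3 : ∀ m, 0 < m → k ≠ 3 * m ^ 2) :
    ∑ t ∈ natReprs112 k with t.1 < t.2.1, signWeight t =
      4 * L2 k + 4 * L12 k + 8 * L13 k + 8 * L112 k := by
  have hweight : ∀ t ∈ {t ∈ natReprs112 k | t.1 < t.2.1}, signWeight t =
      4 * (if t.2.2 = 0 then 1 else 0) + 4 * (if t.1 = 0 ∧ 0 < t.2.2 then 1 else 0) +
      8 * (if 0 < t.1 ∧ 0 < t.2.2 ∧ (t.1 = t.2.2 ∨ t.2.1 = t.2.2) then 1 else 0) +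
      8 * (if 0 < t.1 ∧ 0 < t.2.2 ∧ t.1 ≠ t.2.2 ∧ t.2.1 ≠ t.2.2 then 1 else 0) := by
    rintro ⟨x, y, z⟩ ht
    simp only [mem_filter, mem_natReprs112] at ht ⊢
    obtain ⟨hk, hxy⟩ := ht
    have hx : z = 0 → x ≠ 0 := by
      rintro rfl rfl
      exact h1 y (by omega) (by simpa using hk.symm)
    rw [signWeight, card_natAbsFiber_of_ne_zero (show y ≠ 0 by omega)]
    rcases Nat.eq_zero_or_pos x with rfl | hx' <;> rcases Nat.eq_zero_or_pos z with rfl | hz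
    · simp at hx
    · simp [card_natAbsFiber_zero, card_natAbsFiber_of_ne_zero hz.ne', hz.ne']
    · simp [card_natAbsFiber_zero, card_natAbsFiber_of_ne_zero hx'.ne', hx']
    · simp [card_natAbsFiber_of_ne_zero hz.ne', card_natAbsFiber_of_ne_zero hx'.ne', hz, hx']
      split_ifs <;> omega
  rw [sum_congr rfl hweight]
  simp only [sum_add_distrib, ← mul_sum, sum_boole, filter_filter, Nat.cast_id]
  rw [card_natReprs112_filter_lt_z_eq_zero h1, card_natReprs112_filter_lt_x_eq_zero h3,
    card_natReprs112_filter_lt_z_eq, card_natReprs112_filter_lt_z_ne]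

end

theorem stmt8 (k : ℕ) (hk : 0 < k)
    (h : ∀ m : ℕ, 0 < m → k ≠ m ^ 2 ∧ k ≠ 2 * m ^ 2 ∧ k ≠ 3 * m ^ 2 ∧ k ≠ 4 * m ^ 2) :
    (16 * L112 k : ℤ) =
      N112 k - 8 * L2 k - 8 * L12 k - 16 * L13 k - 16 * L2half k := by
  have hN : N112 k = 16 * L112 k + 8 * L2 k + 8 * L12 k + 16 * L13 k + 16 * L2half k := by
    rw [N112_eq_sum_signWeight, sum_signWeight_natReprs112,
      sum_signWeight_natReprs112_filter_lt (fun m hm => (h m hm).1) (fun m hm => (h m hm).2.2.1),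
      sum_signWeight_natReprs112_filter_eq hk (fun m hm => (h m hm).2.1)
        (fun m hm => (h m hm).2.2.2)]
    ring
  rw [hN]
  push_cast
  ring
end

section
/- Let k be a positive integer and set C(k) = N₁,₁,₂(k) − 8·L₂(k) − 8·L₁,₂(k) − 16·L₁,₃(k) − 16·L₂(k/2), where L₂(k/2) is interpreted as 0 when k is odd. If k = m² for some odd positive integer m, then 16·L₁,₁,₂(k) = C(k) − 4; if k = 2m² for some positive integer m, then 16·L₁,₁,₂(k) = C(k) − 6; if k = 3m² for some positive integer m, then 16·L₁,₁,₂(k) = C(k) − 8; if k = 4m² for some positive integer m, then 16·L₁,₁,₂(k) = C(k) − 12. -/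
noncomputable def C (k : ℕ) : ℤ := N112 k - 8 * L2 k - 8 * L12 k - 16 * L13 k - 16 * L2half k

/-!
Every integer solution of `x² + y² + 2z² = k` is a choice of signs on a nonnegative solution
`(a, b, c)`, with `2 ^ (number of nonzero coordinates)` choices. Sorting the nonnegative solutions
by which coordinates vanish or coincide, each generic class is two copies (exchanging `a` and `b`,
or, when `a = b`, their common value and `c`) of one of the sets counted by `L2 k`, `L12 k`, `L2 (k / 2)`,
`L13 k` and `L112 k`. What is left are the solutions whose nonzero coordinates all equal one `n`;
they exist only for `k ∈ {n², 2n², 3n², 4n²}`, and for `k = d m²` (`d ≤ 4`) the irrationality of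
`√2, √3, √6, √8, √12` and the parity of `m` decide which of these forms `k` takes.
-/

open Finset

theorem Set.ncard_eq_two_mul_of_eq_image_union {α β : Type*} {S : Set β} {P : Set α}
    {f g : α → β} (hf : f.Injective) (hg : g.Injective) (hfg : ∀ p ∈ P, ∀ q ∈ P, f p ≠ g q)
    (hS : S = f '' P ∪ g '' P) : S.ncard = 2 * P.ncard := by
  subst hS
  rcases P.finite_or_infinite with hP | hP
  · rw [Set.ncard_union_eq (by grind) (hP.image f) (hP.image g), Set.ncard_image_of_injective _ hf,
      Set.ncard_image_of_injective _ hg, two_mul]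
  · rw [hP.ncard, ((hP.image hf.injOn).mono Set.subset_union_left).ncard]

def numLifts (n : ℕ) : ℕ := if n = 0 then 1 else 2

theorem ncard_natAbs_eq (n : ℕ) : {x : ℤ | x.natAbs = n}.ncard = numLifts n := by
  have h : {x : ℤ | x.natAbs = n} = {(n : ℤ), -(n : ℤ)} := by ext; simp [Int.natAbs_eq_iff]
  rw [h, numLifts]
  split_ifs with hn
  · simp [hn]
  · exact Set.ncard_pair (by omega)

def natAbs₃ (t : ℤ × ℤ × ℤ) : ℕ × ℕ × ℕ := (t.1.natAbs, t.2.1.natAbs, t.2.2.natAbs)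

def numLifts₃ (s : ℕ × ℕ × ℕ) : ℕ := numLifts s.1 * numLifts s.2.1 * numLifts s.2.2

theorem ncard_natAbs₃_eq (s : ℕ × ℕ × ℕ) : {t | natAbs₃ t = s}.ncard = numLifts₃ s := by
  have h : {t | natAbs₃ t = s} =
      {x : ℤ | x.natAbs = s.1} ×ˢ {x : ℤ | x.natAbs = s.2.1} ×ˢ {x : ℤ | x.natAbs = s.2.2} := by
    ext; simp [natAbs₃, Prod.ext_iff]
  rw [h, Set.ncard_prod, Set.ncard_prod, ncard_natAbs_eq, ncard_natAbs_eq, ncard_natAbs_eq,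
    numLifts₃, mul_assoc]

theorem ncard_preimage_natAbs₃ (S : Finset (ℕ × ℕ × ℕ)) :
    (natAbs₃ ⁻¹' S).ncard = ∑ s ∈ S, numLifts₃ s := by
  rw [← Nat.card_coe_set_eq, card_preimage_eq_sum_card_image_eq]
  · exact sum_congr rfl fun s _ => (Nat.card_coe_set_eq _).trans (ncard_natAbs₃_eq s)
  · intro s _
    refine Set.finite_of_ncard_ne_zero ?_
    rw [ncard_natAbs₃_eq, numLifts₃, numLifts, numLifts, numLifts]
    positivity

noncomputable def mulSqCount (d k : ℕ) : ℕ := {n : ℕ | d * n ^ 2 = k}.ncard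

theorem mulSqCount_eq_one {d k m : ℕ} (hd : d ≠ 0) (hk : k = d * m ^ 2) : mulSqCount d k = 1 := by
  rw [mulSqCount, Set.ncard_eq_one]
  refine ⟨m, ?_⟩
  ext n
  simp [hk, hd]

theorem mulSqCount_eq_zero {d k : ℕ} (h : ∀ n, d * n ^ 2 ≠ k) : mulSqCount d k = 0 := by
  simp [mulSqCount, h]

theorem isSquare_mul_of_mul_sq_eq_mul_sq {d e m n : ℕ} (h : d * n ^ 2 = e * m ^ 2) (hm : m ≠ 0) :
    IsSquare (d * e) := by
  rw [← Rat.isSquare_natCast_iff]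
  refine ⟨d * n / m, ?_⟩
  have hm' : (m : ℚ) ≠ 0 := by exact_mod_cast hm
  have h' : (d * n ^ 2 : ℚ) = e * m ^ 2 := by exact_mod_cast h
  field_simp
  push_cast
  linear_combination -(d : ℚ) * h'

theorem mulSqCount_eq_zero_of_not_isSquare {d e k m : ℕ} (h : ¬IsSquare (d * e)) (hm : m ≠ 0)
    (hk : k = e * m ^ 2) : mulSqCount d k = 0 :=
  mulSqCount_eq_zero fun _ hn => h (isSquare_mul_of_mul_sq_eq_mul_sq (hn.trans hk) hm)

def natSolutions (k : ℕ) : Finset (ℕ × ℕ × ℕ) :=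
  {s ∈ range (k + 1) ×ˢ range (k + 1) ×ˢ range (k + 1) | s.1 ^ 2 + s.2.1 ^ 2 + 2 * s.2.2 ^ 2 = k}

theorem mem_natSolutions {k a b c : ℕ} :
    (a, b, c) ∈ natSolutions k ↔ a ^ 2 + b ^ 2 + 2 * c ^ 2 = k := by
  simp only [natSolutions, mem_filter, mem_product, mem_range, and_iff_right_iff_imp]
  intro h
  refine ⟨?_, ?_, ?_⟩ <;> nlinarith

theorem N112_eq_sum_numLifts₃ (k : ℕ) : N112 k = ∑ s ∈ natSolutions k, numLifts₃ s := by
  rw [N112, ← ncard_preimage_natAbs₃]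
  congr 1
  ext ⟨x, y, z⟩
  simp only [Set.mem_ofPred_eq, Set.mem_preimage, natAbs₃, mem_coe, mem_natSolutions]
  rw [← Nat.cast_inj (R := ℤ)]
  push_cast [Int.natCast_natAbs, sq_abs]
  rfl

def shape : ℕ × ℕ × ℕ → ℕ
  | (a, b, c) =>
    if c = 0 then
      if a = 0 ∨ b = 0 then 0 else if a = b then 1 else 2
    else if a = 0 ∧ b = 0 then 3
    else if a = 0 ∨ b = 0 then (if a + b = c then 4 else 5)
    else if a = b then (if a = c then 6 else 7)
    else if a = c ∨ b = c then 8 else 9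

/-- `2 ^` (number of nonzero coordinates) on shape `i`, i.e. its number of sign choices. -/
def shapeWeight : ℕ → ℕ
  | 0 | 3 => 2
  | 1 | 2 | 4 | 5 => 4
  | _ => 8

def shapeClass (k i : ℕ) : Finset (ℕ × ℕ × ℕ) := {s ∈ natSolutions k | shape s = i}

theorem mem_shapeClass {k i a b c : ℕ} : (a, b, c) ∈ (shapeClass k i : Set (ℕ × ℕ × ℕ)) ↔
    a ^ 2 + b ^ 2 + 2 * c ^ 2 = k ∧ shape (a, b, c) = i := by
  rw [mem_coe, shapeClass, mem_filter, mem_natSolutions]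

theorem sum_numLifts₃_shapeClass {k : ℕ} (hk : 0 < k) (i : ℕ) :
    ∑ s ∈ shapeClass k i, numLifts₃ s = shapeWeight i * #(shapeClass k i) := by
  rw [sum_const_nat fun s hs => ?_, mul_comm]
  obtain ⟨a, b, c⟩ := s
  obtain ⟨hsol, rfl⟩ := mem_shapeClass.1 (mem_coe.2 hs)
  simp only [shape, numLifts₃, numLifts]
  split_ifs <;> simp_all [shapeWeight]

theorem N112_eq_sum_shapeClass {k : ℕ} (hk : 0 < k) :
    N112 k = ∑ i ∈ range 10, shapeWeight i * #(shapeClass k i) := by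
  rw [N112_eq_sum_numLifts₃, ← sum_fiberwise_of_maps_to (g := shape) (t := range 10)]
  · exact sum_congr rfl fun i _ => sum_numLifts₃_shapeClass hk i
  · rintro ⟨a, b, c⟩ -
    simp only [shape, mem_range]
    split_ifs <;> omega

theorem card_shapeClass_zero {k : ℕ} (hk : 0 < k) : #(shapeClass k 0) = 2 * mulSqCount 1 k := by
  rw [← Set.ncard_coe_finset, mulSqCount]
  refine Set.ncard_eq_two_mul_of_eq_image_union (f := fun n => (n, 0, 0)) (g := fun n => (0, n, 0))
    (fun _ _ h => by grind) (fun _ _ h => by grind) (fun p hp q hq h => by grind) ?_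
  ext ⟨a, b, c⟩
  simp only [mem_shapeClass, shape, Set.mem_union, Set.mem_image, Set.mem_ofPred_eq, Prod.mk.injEq,
      existsAndEq, true_and]
  split_ifs <;> grind

theorem card_shapeClass_one {k : ℕ} (hk : 0 < k) : #(shapeClass k 1) = mulSqCount 2 k := by
  have h : (shapeClass k 1 : Set (ℕ × ℕ × ℕ)) = (fun n => (n, n, 0)) '' {n | 2 * n ^ 2 = k} := by
    ext ⟨a, b, c⟩
    simp only [mem_shapeClass, shape, Set.mem_image, Set.mem_ofPred_eq, Prod.mk.injEq, existsAndEq,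
        true_and]
    split_ifs <;> grind
  rw [← Set.ncard_coe_finset, h, Set.ncard_image_of_injective _ fun _ _ h => by grind, mulSqCount]

theorem card_shapeClass_two (k : ℕ) : #(shapeClass k 2) = 2 * L2 k := by
  rw [← Set.ncard_coe_finset, L2]
  refine Set.ncard_eq_two_mul_of_eq_image_union (f := fun p => (p.1, p.2, 0))
    (g := fun p => (p.2, p.1, 0)) (fun _ _ h => by grind) (fun _ _ h => by grind)
    (fun p hp q hq h => by grind) ?_
  ext ⟨a, b, c⟩
  simp only [mem_shapeClass, shape, Set.mem_union, Set.mem_image, Set.mem_ofPred_eq, Prod.mk.injEq,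
      Prod.exists, existsAndEq, true_and]
  split_ifs <;> grind

theorem card_shapeClass_three {k : ℕ} (hk : 0 < k) : #(shapeClass k 3) = mulSqCount 2 k := by
  have h : (shapeClass k 3 : Set (ℕ × ℕ × ℕ)) = (fun n => (0, 0, n)) '' {n | 2 * n ^ 2 = k} := by
    ext ⟨a, b, c⟩
    simp only [mem_shapeClass, shape, Set.mem_image, Set.mem_ofPred_eq, Prod.mk.injEq, existsAndEq]
    split_ifs <;> grind
  rw [← Set.ncard_coe_finset, h, Set.ncard_image_of_injective _ fun _ _ h => by grind, mulSqCount]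

theorem card_shapeClass_four {k : ℕ} (hk : 0 < k) : #(shapeClass k 4) = 2 * mulSqCount 3 k := by
  rw [← Set.ncard_coe_finset, mulSqCount]
  refine Set.ncard_eq_two_mul_of_eq_image_union (f := fun n => (n, 0, n)) (g := fun n => (0, n, n))
    (fun _ _ h => by grind) (fun _ _ h => by grind) (fun p hp q hq h => by grind) ?_
  ext ⟨a, b, c⟩
  simp only [mem_shapeClass, shape, Set.mem_union, Set.mem_image, Set.mem_ofPred_eq, Prod.mk.injEq,
      existsAndEq, true_and]
  split_ifs <;> grind

theorem card_shapeClass_five (k : ℕ) : #(shapeClass k 5) = 2 * L12 k := by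
  rw [← Set.ncard_coe_finset, L12]
  refine Set.ncard_eq_two_mul_of_eq_image_union (f := fun p => (p.1, 0, p.2))
    (g := fun p => (0, p.1, p.2)) (fun _ _ h => by grind) (fun _ _ h => by grind)
    (fun p hp q hq h => by grind) ?_
  ext ⟨a, b, c⟩
  simp only [mem_shapeClass, shape, Set.mem_union, Set.mem_image, Set.mem_ofPred_eq, Prod.mk.injEq,
      Prod.exists, existsAndEq, true_and]
  split_ifs <;> grind

theorem card_shapeClass_six {k : ℕ} (hk : 0 < k) : #(shapeClass k 6) = mulSqCount 4 k := by
  have h : (shapeClass k 6 : Set (ℕ × ℕ × ℕ)) = (fun n => (n, n, n)) '' {n | 4 * n ^ 2 = k} := by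
    ext ⟨a, b, c⟩
    simp only [mem_shapeClass, shape, Set.mem_image, Set.mem_ofPred_eq, Prod.mk.injEq, existsAndEq,
        true_and]
    split_ifs <;> grind
  rw [← Set.ncard_coe_finset, h, Set.ncard_image_of_injective _ fun _ _ h => by grind, mulSqCount]

theorem ncard_twice_sumSq_eq_L2half (k : ℕ) :
    {p : ℕ × ℕ | 0 < p.1 ∧ p.1 < p.2 ∧ 2 * (p.1 ^ 2 + p.2 ^ 2) = k}.ncard = L2half k := by
  rw [L2half, L2]
  split_ifs with hk
  · congr 1
    ext
    simp only [Set.mem_ofPred_eq]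
    omega
  · convert Set.ncard_empty (ℕ × ℕ)
    ext
    simp only [Set.mem_ofPred_eq, Set.mem_empty_iff_false, iff_false]
    omega

theorem card_shapeClass_seven (k : ℕ) : #(shapeClass k 7) = 2 * L2half k := by
  rw [← Set.ncard_coe_finset, ← ncard_twice_sumSq_eq_L2half]
  refine Set.ncard_eq_two_mul_of_eq_image_union (f := fun p => (p.1, p.1, p.2))
    (g := fun p => (p.2, p.2, p.1)) (fun _ _ h => by grind) (fun _ _ h => by grind)
    (fun p hp q hq h => by grind) ?_
  ext ⟨a, b, c⟩
  simp only [mem_shapeClass, shape, Set.mem_union, Set.mem_image, Set.mem_ofPred_eq, Prod.mk.injEq,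
      Prod.exists, existsAndEq, true_and]
  split_ifs <;> grind

theorem card_shapeClass_eight (k : ℕ) : #(shapeClass k 8) = 2 * L13 k := by
  rw [← Set.ncard_coe_finset, L13]
  refine Set.ncard_eq_two_mul_of_eq_image_union (f := fun p => (p.1, p.2, p.2))
    (g := fun p => (p.2, p.1, p.2)) (fun _ _ h => by grind) (fun _ _ h => by grind)
    (fun p hp q hq h => by grind) ?_
  ext ⟨a, b, c⟩
  simp only [mem_shapeClass, shape, Set.mem_union, Set.mem_image, Set.mem_ofPred_eq, Prod.mk.injEq,
      Prod.exists, existsAndEq, true_and]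
  split_ifs <;> grind

theorem card_shapeClass_nine (k : ℕ) : #(shapeClass k 9) = 2 * L112 k := by
  rw [← Set.ncard_coe_finset, L112]
  refine Set.ncard_eq_two_mul_of_eq_image_union (f := id) (g := fun t => (t.2.1, t.1, t.2.2))
    (fun _ _ h => by grind) (fun _ _ h => by grind) (fun p hp q hq h => by grind) ?_
  ext ⟨a, b, c⟩
  simp only [mem_shapeClass, shape, Set.mem_union, Set.mem_image, Set.mem_ofPred_eq, Prod.mk.injEq,
      Prod.exists, existsAndEq, true_and]
  split_ifs <;> grind

/-- Integer solutions of `x² + y² + 2z² = k` all of whose nonzero coordinates have the same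
absolute value `n`: `(±n, 0, 0), (0, ±n, 0)` when `k = n²`; `(±n, ±n, 0), (0, 0, ±n)` when
`k = 2n²`; `(±n, 0, ±n), (0, ±n, ±n)` when `k = 3n²`; `(±n, ±n, ±n)` when `k = 4n²`. -/
noncomputable def degenerateCount (k : ℕ) : ℕ :=
  4 * mulSqCount 1 k + 6 * mulSqCount 2 k + 8 * mulSqCount 3 k + 8 * mulSqCount 4 k

theorem N112_eq {k : ℕ} (hk : 0 < k) :
    N112 k = 16 * L112 k + 8 * L2 k + 8 * L12 k + 16 * L13 k + 16 * L2half k +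
      degenerateCount k := by
  rw [N112_eq_sum_shapeClass hk]
  simp only [sum_range_succ, sum_range_zero, card_shapeClass_zero hk, card_shapeClass_one hk,
    card_shapeClass_two, card_shapeClass_three hk, card_shapeClass_four hk, card_shapeClass_five,
    card_shapeClass_six hk, card_shapeClass_seven, card_shapeClass_eight, card_shapeClass_nine,
    shapeWeight, degenerateCount]
  ring

theorem C_eq {k : ℕ} (hk : 0 < k) : C k = 16 * L112 k + degenerateCount k := by
  rw [C, N112_eq hk]
  push_cast
  ring

theorem degenerateCount_sq_of_odd {m : ℕ} (hm : 0 < m) (hodd : Odd m) :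
    degenerateCount (m ^ 2) = 4 := by
  have h4 : mulSqCount 4 (m ^ 2) = 0 := mulSqCount_eq_zero fun n h => by
    have hsq : m ^ 2 = (2 * n) ^ 2 := by rw [mul_pow]; omega
    have hm2 : m = 2 * n := Nat.pow_left_injective two_ne_zero hsq
    exact Nat.not_even_iff_odd.2 hodd ⟨n, by omega⟩
  rw [degenerateCount, mulSqCount_eq_one one_ne_zero (one_mul _).symm,
    mulSqCount_eq_zero_of_not_isSquare (d := 2) (by norm_num) hm.ne' (one_mul _).symm,
    mulSqCount_eq_zero_of_not_isSquare (d := 3) (by norm_num) hm.ne' (one_mul _).symm, h4]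

theorem degenerateCount_two_mul_sq {m : ℕ} (hm : 0 < m) : degenerateCount (2 * m ^ 2) = 6 := by
  rw [degenerateCount, mulSqCount_eq_zero_of_not_isSquare (d := 1) (by norm_num) hm.ne' rfl,
    mulSqCount_eq_one two_ne_zero rfl,
    mulSqCount_eq_zero_of_not_isSquare (d := 3) (by norm_num) hm.ne' rfl,
    mulSqCount_eq_zero_of_not_isSquare (d := 4) (by norm_num) hm.ne' rfl]

theorem degenerateCount_three_mul_sq {m : ℕ} (hm : 0 < m) : degenerateCount (3 * m ^ 2) = 8 := by
  rw [degenerateCount, mulSqCount_eq_zero_of_not_isSquare (d := 1) (by norm_num) hm.ne' rfl,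
    mulSqCount_eq_zero_of_not_isSquare (d := 2) (by norm_num) hm.ne' rfl,
    mulSqCount_eq_one three_ne_zero rfl,
    mulSqCount_eq_zero_of_not_isSquare (d := 4) (by norm_num) hm.ne' rfl]

theorem degenerateCount_four_mul_sq {m : ℕ} (hm : 0 < m) : degenerateCount (4 * m ^ 2) = 12 := by
  rw [degenerateCount, mulSqCount_eq_one (m := 2 * m) one_ne_zero (by ring),
    mulSqCount_eq_zero_of_not_isSquare (d := 2) (by norm_num) hm.ne' rfl,
    mulSqCount_eq_zero_of_not_isSquare (d := 3) (by norm_num) hm.ne' rfl,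
    mulSqCount_eq_one four_ne_zero rfl]

theorem stmt9 (k : ℕ) (hk : 0 < k) :
    ((∃ m : ℕ, 0 < m ∧ Odd m ∧ k = m ^ 2) → (16 * L112 k : ℤ) = C k - 4) ∧
    ((∃ m : ℕ, 0 < m ∧ k = 2 * m ^ 2) → (16 * L112 k : ℤ) = C k - 6) ∧
    ((∃ m : ℕ, 0 < m ∧ k = 3 * m ^ 2) → (16 * L112 k : ℤ) = C k - 8) ∧
    ((∃ m : ℕ, 0 < m ∧ k = 4 * m ^ 2) → (16 * L112 k : ℤ) = C k - 12) := by
  refine ⟨?_, ?_, ?_, ?_⟩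
  · rintro ⟨m, hm, hodd, rfl⟩
    rw [C_eq hk, degenerateCount_sq_of_odd hm hodd]; ring
  · rintro ⟨m, hm, rfl⟩
    rw [C_eq hk, degenerateCount_two_mul_sq hm]; ring
  · rintro ⟨m, hm, rfl⟩
    rw [C_eq hk, degenerateCount_three_mul_sq hm]; ring
  · rintro ⟨m, hm, rfl⟩
    rw [C_eq hk, degenerateCount_four_mul_sq hm]; ring
end

section
/- Let k be a positive integer with k ≡ 4 (mod 8). Then the number of quadruples (a,b,c,d) of positive integers with d odd satisfying (2a+2b+2c+d)² + (2b+2c+d)² + (2c+d)² + d² = k is equal to L₄(k) − L₄(k/4). -/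
/-! When `4 ∣ k`, squares being `0` or `1` mod 4 force the four entries of a solution of
`x² + y² + z² + v² = k` to share their parity. Solutions with all entries even are twice the
solutions for `k / 4`. Solutions `x < y < z < v` with all entries odd correspond bijectively to
their consecutive gaps: `d = x`, `c = (y - x) / 2`, `b = (z - y) / 2`, `a = (v - z) / 2`. -/

noncomputable def L4 (k : ℕ) : ℕ := {q : ℕ × ℕ × ℕ × ℕ | 0 < q.1 ∧ q.1 < q.2.1 ∧ q.2.1 < q.2.2.1 ∧ q.2.2.1 < q.2.2.2 ∧ q.1 ^ 2 + q.2.1 ^ 2 + q.2.2.1 ^ 2 + q.2.2.2 ^ 2 = k}.ncard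

namespace L4

def strictQuads (k : ℕ) : Set (ℕ × ℕ × ℕ × ℕ) :=
  {q | 0 < q.1 ∧ q.1 < q.2.1 ∧ q.2.1 < q.2.2.1 ∧ q.2.2.1 < q.2.2.2 ∧
    q.1 ^ 2 + q.2.1 ^ 2 + q.2.2.1 ^ 2 + q.2.2.2 ^ 2 = k}

@[simp]
theorem mem_strictQuads {k x y z v : ℕ} : (x, y, z, v) ∈ strictQuads k ↔
    0 < x ∧ x < y ∧ y < z ∧ z < v ∧ x ^ 2 + y ^ 2 + z ^ 2 + v ^ 2 = k := Iff.rfl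

def gapQuads (k : ℕ) : Set (ℕ × ℕ × ℕ × ℕ) :=
  {q | 0 < q.1 ∧ 0 < q.2.1 ∧ 0 < q.2.2.1 ∧ 0 < q.2.2.2 ∧ Odd q.2.2.2 ∧
    (2 * q.1 + 2 * q.2.1 + 2 * q.2.2.1 + q.2.2.2) ^ 2 + (2 * q.2.1 + 2 * q.2.2.1 + q.2.2.2) ^ 2 +
      (2 * q.2.2.1 + q.2.2.2) ^ 2 + q.2.2.2 ^ 2 = k}

@[simp]
theorem mem_gapQuads {k a b c d : ℕ} : (a, b, c, d) ∈ gapQuads k ↔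
    0 < a ∧ 0 < b ∧ 0 < c ∧ 0 < d ∧ Odd d ∧
      (2 * a + 2 * b + 2 * c + d) ^ 2 + (2 * b + 2 * c + d) ^ 2 + (2 * c + d) ^ 2 + d ^ 2 = k :=
  Iff.rfl

def ofGaps (q : ℕ × ℕ × ℕ × ℕ) : ℕ × ℕ × ℕ × ℕ :=
  (q.2.2.2, 2 * q.2.2.1 + q.2.2.2, 2 * q.2.1 + 2 * q.2.2.1 + q.2.2.2,
    2 * q.1 + 2 * q.2.1 + 2 * q.2.2.1 + q.2.2.2)

def double (q : ℕ × ℕ × ℕ × ℕ) : ℕ × ℕ × ℕ × ℕ :=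
  (2 * q.1, 2 * q.2.1, 2 * q.2.2.1, 2 * q.2.2.2)

theorem ofGaps_injective : Function.Injective ofGaps := by
  rintro ⟨a, b, c, d⟩ ⟨a', b', c', d'⟩ h
  simp only [ofGaps, Prod.mk.injEq] at h ⊢
  omega

theorem double_injective : Function.Injective double := by
  rintro ⟨a, b, c, d⟩ ⟨a', b', c', d'⟩ h
  simp only [double, Prod.mk.injEq] at h ⊢
  omega

theorem strictQuads_finite (k : ℕ) : (strictQuads k).Finite := by
  refine (Set.finite_Iic ((k, k, k, k) : ℕ × ℕ × ℕ × ℕ)).subset ?_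
  rintro ⟨x, y, z, v⟩ hq
  obtain ⟨-, -, -, -, hk⟩ := mem_strictQuads.mp hq
  have := Nat.le_self_pow two_ne_zero x
  have := Nat.le_self_pow two_ne_zero y
  have := Nat.le_self_pow two_ne_zero z
  have := Nat.le_self_pow two_ne_zero v
  simp only [Set.mem_Iic, Prod.mk_le_mk]
  omega

theorem sq_mod_four (x : ℕ) : x ^ 2 % 4 = x % 2 := by
  rcases Nat.even_or_odd' x with ⟨m, rfl | rfl⟩
  · rw [show (2 * m) ^ 2 = 4 * (m * m) by ring]
    omega
  · rw [show (2 * m + 1) ^ 2 = 4 * (m * m + m) + 1 by ring]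
    omega

theorem mod_two_eq_of_four_dvd_sum_sq {x y z v : ℕ} (h : 4 ∣ x ^ 2 + y ^ 2 + z ^ 2 + v ^ 2) :
    y % 2 = x % 2 ∧ z % 2 = x % 2 ∧ v % 2 = x % 2 := by
  have := sq_mod_four x
  have := sq_mod_four y
  have := sq_mod_four z
  have := sq_mod_four v
  omega

theorem ofGaps_image_gapQuads {k : ℕ} (hk : 4 ∣ k) :
    ofGaps '' gapQuads k = strictQuads k ∩ {q | Odd q.1} := by
  ext ⟨x, y, z, v⟩
  simp only [Set.mem_image, Prod.exists, mem_gapQuads, mem_strictQuads, Set.mem_inter_iff,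
    Set.mem_ofPred_eq, Nat.odd_iff]
  constructor
  · rintro ⟨a, b, c, d, ⟨ha, hb, hc, hd, hodd, hsum⟩, heq⟩
    simp only [ofGaps, Prod.mk.injEq] at heq
    obtain ⟨rfl, rfl, rfl, rfl⟩ := heq
    exact ⟨⟨hd, by omega, by omega, by omega, by rw [← hsum]; ring⟩, hodd⟩
  · rintro ⟨⟨hx, hxy, hyz, hzv, hsum⟩, hodd⟩
    obtain ⟨hy, hz, hv⟩ := mod_two_eq_of_four_dvd_sum_sq (hsum ▸ hk)
    have e2 : 2 * ((y - x) / 2) + x = y := by omega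
    have e3 : 2 * ((z - y) / 2) + 2 * ((y - x) / 2) + x = z := by omega
    have e4 : 2 * ((v - z) / 2) + 2 * ((z - y) / 2) + 2 * ((y - x) / 2) + x = v := by omega
    refine ⟨(v - z) / 2, (z - y) / 2, (y - x) / 2, x, ⟨by omega, by omega, by omega, hx,
      hodd, ?_⟩, by simp only [ofGaps, e2, e3, e4]⟩
    rw [e4, e3, e2, ← hsum]
    ring

theorem double_image_strictQuads {k : ℕ} (hk : 4 ∣ k) :
    double '' strictQuads (k / 4) = strictQuads k \ {q | Odd q.1} := by
  ext ⟨x, y, z, v⟩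
  simp only [Set.mem_image, Prod.exists, mem_strictQuads, Set.mem_sdiff,
    Set.mem_ofPred_eq, Nat.odd_iff]
  constructor
  · rintro ⟨X, Y, Z, V, ⟨hX, hXY, hYZ, hZV, hsum⟩, heq⟩
    simp only [double, Prod.mk.injEq] at heq
    obtain ⟨rfl, rfl, rfl, rfl⟩ := heq
    refine ⟨⟨by omega, by omega, by omega, by omega, ?_⟩, by omega⟩
    rw [show (2 * X) ^ 2 + (2 * Y) ^ 2 + (2 * Z) ^ 2 + (2 * V) ^ 2 =
      4 * (X ^ 2 + Y ^ 2 + Z ^ 2 + V ^ 2) by ring, hsum]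
    omega
  · rintro ⟨⟨hx, hxy, hyz, hzv, hsum⟩, heven⟩
    obtain ⟨hy, hz, hv⟩ := mod_two_eq_of_four_dvd_sum_sq (hsum ▸ hk)
    obtain ⟨X, rfl⟩ : 2 ∣ x := by omega
    obtain ⟨Y, rfl⟩ : 2 ∣ y := by omega
    obtain ⟨Z, rfl⟩ : 2 ∣ z := by omega
    obtain ⟨V, rfl⟩ : 2 ∣ v := by omega
    refine ⟨X, Y, Z, V, ⟨by omega, by omega, by omega, by omega, ?_⟩, rfl⟩
    rw [← hsum, show (2 * X) ^ 2 + (2 * Y) ^ 2 + (2 * Z) ^ 2 + (2 * V) ^ 2 =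
      4 * (X ^ 2 + Y ^ 2 + Z ^ 2 + V ^ 2) by ring]
    omega

end L4

open L4 in
theorem stmt15_general (k : ℕ) (h : k % 8 = 4) :
    ({q : ℕ × ℕ × ℕ × ℕ | 0 < q.1 ∧ 0 < q.2.1 ∧ 0 < q.2.2.1 ∧ 0 < q.2.2.2 ∧ Odd q.2.2.2 ∧
      (2 * q.1 + 2 * q.2.1 + 2 * q.2.2.1 + q.2.2.2) ^ 2 + (2 * q.2.1 + 2 * q.2.2.1 + q.2.2.2) ^ 2 +
        (2 * q.2.2.1 + q.2.2.2) ^ 2 + q.2.2.2 ^ 2 = k}.ncard : ℤ) = L4 k - L4 (k / 4) := by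
  have hk : 4 ∣ k := by omega
  have hsplit := Set.ncard_inter_add_ncard_sdiff_eq_ncard (strictQuads k) {q | Odd q.1}
    (strictQuads_finite k)
  rw [← ofGaps_image_gapQuads hk, ← double_image_strictQuads hk,
    Set.ncard_image_of_injective _ ofGaps_injective,
    Set.ncard_image_of_injective _ double_injective] at hsplit
  change ((gapQuads k).ncard : ℤ) = (strictQuads k).ncard - (strictQuads (k / 4)).ncard
  omega

theorem stmt15 (k : ℕ) (hk : 0 < k) (h : k % 8 = 4) :
    ({q : ℕ × ℕ × ℕ × ℕ | 0 < q.1 ∧ 0 < q.2.1 ∧ 0 < q.2.2.1 ∧ 0 < q.2.2.2 ∧ Odd q.2.2.2 ∧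
      (2 * q.1 + 2 * q.2.1 + 2 * q.2.2.1 + q.2.2.2) ^ 2 + (2 * q.2.1 + 2 * q.2.2.1 + q.2.2.2) ^ 2 +
        (2 * q.2.2.1 + q.2.2.2) ^ 2 + q.2.2.2 ^ 2 = k}.ncard : ℤ) = L4 k - L4 (k / 4) :=
  stmt15_general k h
end

section
/- Let k be a positive integer divisible by 4. Then the number of quadruples (a,b,c,d) of positive integers with d even satisfying (2a+2b+2c+d)² + (2b+2c+d)² + (2c+d)² + d² = k is equal to L₄(k/4). -/
open Set

def evenGapQuadruples (k : ℕ) : Set (ℕ × ℕ × ℕ × ℕ) :=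
  {q | 0 < q.1 ∧ 0 < q.2.1 ∧ 0 < q.2.2.1 ∧ 0 < q.2.2.2 ∧ Even q.2.2.2 ∧
    (2 * q.1 + 2 * q.2.1 + 2 * q.2.2.1 + q.2.2.2) ^ 2 + (2 * q.2.1 + 2 * q.2.2.1 + q.2.2.2) ^ 2 +
      (2 * q.2.2.1 + q.2.2.2) ^ 2 + q.2.2.2 ^ 2 = k}

def increasingQuadruples (k : ℕ) : Set (ℕ × ℕ × ℕ × ℕ) :=
  {q | 0 < q.1 ∧ q.1 < q.2.1 ∧ q.2.1 < q.2.2.1 ∧ q.2.2.1 < q.2.2.2 ∧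
    q.1 ^ 2 + q.2.1 ^ 2 + q.2.2.1 ^ 2 + q.2.2.2 ^ 2 = k}

def partialSumsOfGaps (q : ℕ × ℕ × ℕ × ℕ) : ℕ × ℕ × ℕ × ℕ :=
  (q.2.2.2 / 2, q.2.2.1 + q.2.2.2 / 2, q.2.1 + q.2.2.1 + q.2.2.2 / 2,
    q.1 + q.2.1 + q.2.2.1 + q.2.2.2 / 2)

lemma sum_sq_gaps_eq_four_mul (a b c e : ℕ) :
    (2 * a + 2 * b + 2 * c + 2 * e) ^ 2 + (2 * b + 2 * c + 2 * e) ^ 2 + (2 * c + 2 * e) ^ 2 +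
        (2 * e) ^ 2 =
      4 * (e ^ 2 + (c + e) ^ 2 + (b + c + e) ^ 2 + (a + b + c + e) ^ 2) := by
  ring

lemma partialSumsOfGaps_mapsTo (m : ℕ) :
    MapsTo partialSumsOfGaps (evenGapQuadruples (4 * m)) (increasingQuadruples m) := by
  rintro ⟨a, b, c, d⟩ ⟨ha, hb, hc, hd, ⟨e, rfl⟩, hsum⟩
  dsimp only at ha hb hc hd hsum
  rw [← two_mul e, sum_sq_gaps_eq_four_mul] at hsum
  simp only [increasingQuadruples, partialSumsOfGaps, mem_ofPred_eq, ← two_mul e,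
    Nat.mul_div_cancel_left e two_pos]
  omega

lemma partialSumsOfGaps_injOn : InjOn partialSumsOfGaps {q | Even q.2.2.2} := by
  rintro ⟨a, b, c, d⟩ ⟨e, rfl⟩ ⟨a', b', c', d'⟩ ⟨e', rfl⟩ h
  simp only [partialSumsOfGaps, Prod.mk.injEq] at h ⊢
  omega

lemma partialSumsOfGaps_surjOn (m : ℕ) :
    SurjOn partialSumsOfGaps (evenGapQuadruples (4 * m)) (increasingQuadruples m) := by
  rintro ⟨x, y, z, v⟩ ⟨hx, hxy, hyz, hzv, hsum⟩
  dsimp only at hxy hyz hzv hsum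
  obtain ⟨c, rfl⟩ : ∃ c, y = c + 1 + x := ⟨y - x - 1, by omega⟩
  obtain ⟨b, rfl⟩ : ∃ b, z = b + 1 + (c + 1 + x) := ⟨z - (c + 1 + x) - 1, by omega⟩
  obtain ⟨a, rfl⟩ : ∃ a, v = a + 1 + (b + 1 + (c + 1 + x)) :=
    ⟨v - (b + 1 + (c + 1 + x)) - 1, by omega⟩
  refine ⟨(a + 1, b + 1, c + 1, 2 * x), ⟨a.succ_pos, b.succ_pos, c.succ_pos, Nat.mul_pos two_pos hx, even_two_mul x, ?_⟩,
    ?_⟩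
  · rw [sum_sq_gaps_eq_four_mul, ← hsum]
    ring
  · simp only [partialSumsOfGaps, Prod.mk.injEq]
    omega

lemma partialSumsOfGaps_bijOn (m : ℕ) :
    BijOn partialSumsOfGaps (evenGapQuadruples (4 * m)) (increasingQuadruples m) :=
  ⟨partialSumsOfGaps_mapsTo m,
    partialSumsOfGaps_injOn.mono fun _ hq ↦ hq.2.2.2.2.1,
    partialSumsOfGaps_surjOn m⟩

theorem stmt16_general (k : ℕ) (h : 4 ∣ k) :
    {q : ℕ × ℕ × ℕ × ℕ | 0 < q.1 ∧ 0 < q.2.1 ∧ 0 < q.2.2.1 ∧ 0 < q.2.2.2 ∧ Even q.2.2.2 ∧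
      (2 * q.1 + 2 * q.2.1 + 2 * q.2.2.1 + q.2.2.2) ^ 2 + (2 * q.2.1 + 2 * q.2.2.1 + q.2.2.2) ^ 2 +
        (2 * q.2.2.1 + q.2.2.2) ^ 2 + q.2.2.2 ^ 2 = k}.ncard = L4 (k / 4) := by
  obtain ⟨m, rfl⟩ := h
  rw [Nat.mul_div_cancel_left m four_pos]
  exact (partialSumsOfGaps_bijOn m).ncard_eq

theorem stmt16 (k : ℕ) (hk : 0 < k) (h : 4 ∣ k) :
    {q : ℕ × ℕ × ℕ × ℕ | 0 < q.1 ∧ 0 < q.2.1 ∧ 0 < q.2.2.1 ∧ 0 < q.2.2.2 ∧ Even q.2.2.2 ∧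
      (2 * q.1 + 2 * q.2.1 + 2 * q.2.2.1 + q.2.2.2) ^ 2 + (2 * q.2.1 + 2 * q.2.2.1 + q.2.2.2) ^ 2 +
        (2 * q.2.2.1 + q.2.2.2) ^ 2 + q.2.2.2 ^ 2 = k}.ncard = L4 (k / 4) :=
  stmt16_general k h
end

section
/- Let k be a positive integer divisible by 4. Then the number of quadruples (a,b,c,d) of positive integers with c ≠ d and c ≡ d (mod 2) satisfying (2a+2b+c+d)² + (2b+c+d)² + (c+d)² + (c−d)² = k is equal to 2·L₄(k/4). -/
theorem Set.ncard_union_image_of_injective {α : Type*} {t : Set α} {σ : α → α}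
    (hσ : σ.Injective) (hdisj : Disjoint t (σ '' t)) : (t ∪ σ '' t).ncard = 2 * t.ncard := by
  rcases t.finite_or_infinite with ht | ht
  · rw [Set.ncard_union_eq hdisj ht (ht.image σ), Set.ncard_image_of_injective t hσ, two_mul]
  · rw [ht.ncard, (ht.mono Set.subset_union_left).ncard]

def L4Set (m : ℕ) : Set (ℕ × ℕ × ℕ × ℕ) :=
  {q | 0 < q.1 ∧ q.1 < q.2.1 ∧ q.2.1 < q.2.2.1 ∧ q.2.2.1 < q.2.2.2 ∧
    q.1 ^ 2 + q.2.1 ^ 2 + q.2.2.1 ^ 2 + q.2.2.2 ^ 2 = m}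

def paramSet (n : ℤ) : Set (ℕ × ℕ × ℕ × ℕ) :=
  {q | 0 < q.1 ∧ 0 < q.2.1 ∧ 0 < q.2.2.1 ∧ 0 < q.2.2.2 ∧
    q.2.2.1 ≠ q.2.2.2 ∧ q.2.2.1 % 2 = q.2.2.2 % 2 ∧
    ((2 * q.1 + 2 * q.2.1 + q.2.2.1 + q.2.2.2 : ℤ)) ^ 2 +
      ((2 * q.2.1 + q.2.2.1 + q.2.2.2 : ℤ)) ^ 2 +
      ((q.2.2.1 + q.2.2.2 : ℤ)) ^ 2 + ((q.2.2.1 : ℤ) - (q.2.2.2 : ℤ)) ^ 2 = n}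

theorem mem_L4Set {m x y z v : ℕ} : (x, y, z, v) ∈ L4Set m ↔
    0 < x ∧ x < y ∧ y < z ∧ z < v ∧ x ^ 2 + y ^ 2 + z ^ 2 + v ^ 2 = m := Iff.rfl

theorem mem_paramSet {n : ℤ} {a b c d : ℕ} : (a, b, c, d) ∈ paramSet n ↔
    0 < a ∧ 0 < b ∧ 0 < c ∧ 0 < d ∧ c ≠ d ∧ c % 2 = d % 2 ∧
      (2 * a + 2 * b + c + d : ℤ) ^ 2 + (2 * b + c + d : ℤ) ^ 2 + (c + d : ℤ) ^ 2 +
        (c - d : ℤ) ^ 2 = n := Iff.rfl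

def swapCD (q : ℕ × ℕ × ℕ × ℕ) : ℕ × ℕ × ℕ × ℕ := (q.1, q.2.1, q.2.2.2, q.2.2.1)

def toParam (q : ℕ × ℕ × ℕ × ℕ) : ℕ × ℕ × ℕ × ℕ :=
  (q.2.2.2 - q.2.2.1, q.2.2.1 - q.2.1, q.2.1 + q.1, q.2.1 - q.1)

theorem swapCD_involutive : Function.Involutive swapCD := fun _ => rfl

theorem swapCD_mem_paramSet {n : ℤ} {q : ℕ × ℕ × ℕ × ℕ} (hq : q ∈ paramSet n) :
    swapCD q ∈ paramSet n := by
  obtain ⟨a, b, c, d⟩ := q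
  obtain ⟨ha, hb, hc, hd, hcd, hpar, hsum⟩ := mem_paramSet.1 hq
  exact mem_paramSet.2 ⟨ha, hb, hd, hc, hcd.symm, hpar.symm, by rw [← hsum]; ring⟩

theorem paramSet_eq_union_image_swapCD (n : ℤ) :
    paramSet n = {q ∈ paramSet n | q.2.2.2 < q.2.2.1} ∪
      swapCD '' {q ∈ paramSet n | q.2.2.2 < q.2.2.1} := by
  ext q
  refine ⟨fun hq => ?_, ?_⟩
  · rcases lt_or_gt_of_ne hq.2.2.2.2.1 with hlt | hgt
    · exact Or.inr ⟨swapCD q, ⟨swapCD_mem_paramSet hq, hlt⟩, swapCD_involutive q⟩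
    · exact Or.inl ⟨hq, hgt⟩
  · rintro (⟨hq, -⟩ | ⟨p, ⟨hp, -⟩, rfl⟩)
    exacts [hq, swapCD_mem_paramSet hp]

theorem disjoint_image_swapCD (n : ℤ) :
    Disjoint {q ∈ paramSet n | q.2.2.2 < q.2.2.1}
      (swapCD '' {q ∈ paramSet n | q.2.2.2 < q.2.2.1}) := by
  rw [Set.disjoint_left]
  rintro q ⟨-, hq⟩ ⟨p, ⟨-, hp⟩, rfl⟩
  exact lt_asymm hq hp

theorem param_sum_sq_eq {a b c d x y z v : ℤ} (ha : a = v - z) (hb : b = z - y)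
    (hc : c = y + x) (hd : d = y - x) :
    (2 * a + 2 * b + c + d) ^ 2 + (2 * b + c + d) ^ 2 + (c + d) ^ 2 + (c - d) ^ 2 =
      4 * (x ^ 2 + y ^ 2 + z ^ 2 + v ^ 2) := by
  subst_vars; ring

theorem toParam_injOn (m : ℕ) : Set.InjOn toParam (L4Set m) := by
  rintro ⟨x, y, z, v⟩ hq ⟨x', y', z', v'⟩ hq' h
  obtain ⟨-, hxy, hyz, hzv, -⟩ := mem_L4Set.1 hq
  obtain ⟨-, hxy', hyz', hzv', -⟩ := mem_L4Set.1 hq'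
  simp only [toParam, Prod.mk.injEq] at h ⊢
  omega

theorem image_toParam_L4Set (m : ℕ) :
    toParam '' L4Set m = {q ∈ paramSet (4 * m) | q.2.2.2 < q.2.2.1} := by
  ext ⟨a, b, c, d⟩
  constructor
  · rintro ⟨⟨x, y, z, v⟩, hmem, hq⟩
    obtain ⟨hx, hxy, hyz, hzv, hsum⟩ := mem_L4Set.1 hmem
    simp only [toParam, Prod.mk.injEq] at hq
    obtain ⟨rfl, rfl, rfl, rfl⟩ := hq
    refine ⟨mem_paramSet.2 ⟨by omega, by omega, by omega, by omega, by omega, by omega, ?_⟩,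
      show y - x < y + x by omega⟩
    rw [param_sum_sq_eq (x := x) (y := y) (z := z) (v := v) (by omega) (by omega) (by omega)
      (by omega)]
    exact_mod_cast congrArg (4 * ·) hsum
  · rintro ⟨hq, hdc : d < c⟩
    obtain ⟨ha, hb, hc, hd, -, hpar, hsum⟩ := mem_paramSet.1 hq
    refine ⟨((c - d) / 2, (c + d) / 2, (c + d) / 2 + b, (c + d) / 2 + b + a),
      mem_L4Set.2 ⟨by omega, by omega, by omega, by omega, ?_⟩, ?_⟩
    · rw [param_sum_sq_eq (x := ((c - d) / 2 : ℕ)) (y := ((c + d) / 2 : ℕ))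
        (z := ((c + d) / 2 + b : ℕ)) (v := ((c + d) / 2 + b + a : ℕ))
        (by push_cast; ring) (by push_cast; ring) (by omega) (by omega)] at hsum
      exact_mod_cast (mul_right_injective₀ four_ne_zero hsum : _ = (m : ℤ))
    · simp only [toParam, Prod.mk.injEq]
      omega

theorem stmt18_general (k : ℕ) (h : 4 ∣ k) :
    {q : ℕ × ℕ × ℕ × ℕ | 0 < q.1 ∧ 0 < q.2.1 ∧ 0 < q.2.2.1 ∧ 0 < q.2.2.2 ∧
      q.2.2.1 ≠ q.2.2.2 ∧ q.2.2.1 % 2 = q.2.2.2 % 2 ∧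
      ((2 * q.1 + 2 * q.2.1 + q.2.2.1 + q.2.2.2 : ℤ)) ^ 2 +
        ((2 * q.2.1 + q.2.2.1 + q.2.2.2 : ℤ)) ^ 2 +
        ((q.2.2.1 + q.2.2.2 : ℤ)) ^ 2 + ((q.2.2.1 : ℤ) - (q.2.2.2 : ℤ)) ^ 2 = (k : ℤ)}.ncard
      = 2 * L4 (k / 4) := by
  obtain ⟨m, rfl⟩ := h
  change (paramSet ((4 * m : ℕ) : ℤ)).ncard = 2 * (L4Set (4 * m / 4)).ncard
  rw [Nat.mul_div_cancel_left m four_pos, Nat.cast_mul, Nat.cast_ofNat,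
    paramSet_eq_union_image_swapCD,
    Set.ncard_union_image_of_injective swapCD_involutive.injective (disjoint_image_swapCD _),
    ← image_toParam_L4Set, (toParam_injOn m).ncard_image]

theorem stmt18 (k : ℕ) (hk : 0 < k) (h : 4 ∣ k) :
    {q : ℕ × ℕ × ℕ × ℕ | 0 < q.1 ∧ 0 < q.2.1 ∧ 0 < q.2.2.1 ∧ 0 < q.2.2.2 ∧
      q.2.2.1 ≠ q.2.2.2 ∧ q.2.2.1 % 2 = q.2.2.2 % 2 ∧
      ((2 * q.1 + 2 * q.2.1 + q.2.2.1 + q.2.2.2 : ℤ)) ^ 2 +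
        ((2 * q.2.1 + q.2.2.1 + q.2.2.2 : ℤ)) ^ 2 +
        ((q.2.2.1 + q.2.2.2 : ℤ)) ^ 2 + ((q.2.2.1 : ℤ) - (q.2.2.2 : ℤ)) ^ 2 = (k : ℤ)}.ncard
      = 2 * L4 (k / 4) :=
  stmt18_general k h
end
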